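/- arXiv:1407.8543 — 2 statements merged into one kernel-verified Lean document; each statement's English description precedes it below -/
import Mathlib

section
/- Let c_{ij} (1 ≤ i < j ≤ n) and ℓ_1,…,ℓ_n be fixed integers with ℓ_i ≥ 0 for all i, and let (C(c,ℓ), ρ) be the corresponding Grossberg–Karshon twisted cube. If (C(c,ℓ), ρ) is twisted, then there exists an increasing sequence of indices 1 ≤ j_0 < j_1 < ⋯ < j_s ≤ n with s ≥ 1 such that: (1) ℓ_{j_s} > 0; (2) c_{j_0 j_1} > 0; and (3) c_{j_t j_{t+1}} < 0 for all t = 1,…,s−1. -/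
open Finset

/-- `A_j(x) = ℓ_j − Σ_{k>j} c_{jk} x_k` (for the last index the sum is empty). -/
noncomputable def GKA {n : ℕ} (c : Fin n → Fin n → ℤ) (ℓ : Fin n → ℤ)
    (j : Fin n) (x : Fin n → ℝ) : ℝ :=
  (ℓ j : ℝ) - ∑ k ∈ Finset.univ.filter (fun k : Fin n => j < k), (c j k : ℝ) * x k

/-- The Grossberg–Karshon twisted cube `C(c,ℓ)`. -/
noncomputable def GKcube {n : ℕ} (c : Fin n → Fin n → ℤ) (ℓ : Fin n → ℤ) :
    Set (Fin n → ℝ) :=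
  {x | ∀ j : Fin n, (GKA c ℓ j x < x j ∧ x j < 0) ∨ (0 ≤ x j ∧ x j ≤ GKA c ℓ j x)}

/-- `sgn(t) = 1` for `t < 0` and `−1` for `t ≥ 0`. -/
noncomputable def GKsgn (t : ℝ) : ℝ := if t < 0 then 1 else -1

open Classical in
/-- The density function `ρ`: `ρ(x) = (−1)^n ∏_k sgn(x_k)` on `C(c,ℓ)`, `0` elsewhere. -/
noncomputable def GKrho {n : ℕ} (c : Fin n → Fin n → ℤ) (ℓ : Fin n → ℤ)
    (x : Fin n → ℝ) : ℝ :=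
  if x ∈ GKcube c ℓ then (-1 : ℝ) ^ n * ∏ k : Fin n, GKsgn (x k) else 0

/-- `(C(c,ℓ), ρ)` is untwisted: `C(c,ℓ)` is closed, convex, the convex hull of a
finite set, and `ρ ≡ 1` on `C(c,ℓ)`.  "Twisted" is the negation of this. -/
noncomputable def GKUntwisted {n : ℕ} (c : Fin n → Fin n → ℤ) (ℓ : Fin n → ℤ) : Prop :=
  IsClosed (GKcube c ℓ) ∧ Convex ℝ (GKcube c ℓ) ∧
  (∃ S : Finset (Fin n → ℝ), GKcube c ℓ = convexHull ℝ (S : Set (Fin n → ℝ))) ∧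
  (∀ x ∈ GKcube c ℓ, GKrho c ℓ x = 1)

/-- The Cartier data `m_σ`, defined by downward recursion:
`m_{σ,k} = 0` if `σ_k = +` (encoded `false`), and
`m_{σ,k} = ℓ_k − Σ_{s>k} c_{ks} m_{σ,s}` if `σ_k = −` (encoded `true`). -/
def GKm {n : ℕ} (c : Fin n → Fin n → ℤ) (ℓ : Fin n → ℤ) (σ : Fin n → Bool)
    (k : Fin n) : ℤ :=
  if σ k then
    ℓ k - ∑ s ∈ (Finset.univ.filter fun s : Fin n => k < s).attach,
      c k s.1 * GKm c ℓ σ s.1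
  else 0
termination_by n - k.val
decreasing_by
  have h := s.2
  simp only [Finset.mem_filter, Finset.mem_univ, true_and, Fin.lt_def] at h
  omega

/-- `A` is the Cartan matrix of a complex semisimple Lie algebra of rank `r`,
i.e. a generalized Cartan matrix of finite type: diagonal entries `2`,
nonpositive off-diagonal entries, `A_{ab} = 0 ↔ A_{ba} = 0`, and `A` is
symmetrizable by positive rationals `d_a` with `(d_a A_{ab})` symmetric
positive definite. -/
def IsCartanMatrix {r : ℕ} (A : Matrix (Fin r) (Fin r) ℤ) : Prop :=
  (∀ a, A a a = 2) ∧
  (∀ a b, a ≠ b → A a b ≤ 0) ∧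
  (∀ a b, A a b = 0 ↔ A b a = 0) ∧
  (∃ d : Fin r → ℚ, (∀ a, 0 < d a) ∧
    (∀ a b, d a * (A a b : ℚ) = d b * (A b a : ℚ)) ∧
    (∀ x : Fin r → ℚ, x ≠ 0 → 0 < ∑ a, ∑ b, x a * d a * (A a b : ℚ) * x b))

/-- `(w_0, …, w_s)` is a diagram walk followed by the condition that the final
root appears in `λ`: a `λ`-walk.  (Successive entries are distinct and adjacent
in the Dynkin diagram, and `λ_{w_s} > 0`.) -/
def IsLambdaWalkSeq {r : ℕ} (A : Matrix (Fin r) (Fin r) ℤ) (lam : Fin r → ℤ)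
    {s : ℕ} (w : Fin (s + 1) → Fin r) : Prop :=
  (∀ t : Fin s, w t.castSucc ≠ w t.succ ∧ A (w t.castSucc) (w t.succ) < 0) ∧
  0 < lam (w (Fin.last s))

/-- `(w_0, w_1, …, w_s)` is a hesitant `λ`-walk: `s ≥ 1`, `w_0 = w_1`, the
walking component `(w_1, …, w_s)` is a diagram walk, and `λ_{w_s} > 0`. -/
def IsHesitantLambdaWalkSeq {r : ℕ} (A : Matrix (Fin r) (Fin r) ℤ)
    (lam : Fin r → ℤ) {s : ℕ} (w : Fin (s + 1) → Fin r) : Prop :=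
  1 ≤ s ∧ w 0 = w 1 ∧
  (∀ t : Fin s, 1 ≤ t.val →
    (w t.castSucc ≠ w t.succ ∧ A (w t.castSucc) (w t.succ) < 0)) ∧
  0 < lam (w (Fin.last s))

/-- The word `i = (i_1, …, i_n)` is hesitant-`λ`-walk-avoiding: no subword
(subsequence, given by a strictly increasing reindexing `j`) is a hesitant
`λ`-walk. -/
def HesitantLambdaWalkAvoiding {r n : ℕ} (A : Matrix (Fin r) (Fin r) ℤ)
    (lam : Fin r → ℤ) (i : Fin n → Fin r) : Prop :=
  ¬ ∃ (s : ℕ) (j : Fin (s + 1) → Fin n), StrictMono j ∧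
      IsHesitantLambdaWalkSeq A lam (i ∘ j)

/-- Minimality of a hesitant `λ`-walk `(w_0, …, w_s)`: the entries of the
walking component `w_1, …, w_s` are pairwise distinct, and if `s ≥ 2` then
`λ_{w_t} = 0` for `0 ≤ t ≤ s − 1`. -/
def MinimalHLW {r s : ℕ} (lam : Fin r → ℤ) (w : Fin (s + 1) → Fin r) : Prop :=
  (∀ p q : Fin (s + 1), 1 ≤ p.val → 1 ≤ q.val → w p = w q → p = q) ∧
  (2 ≤ s → ∀ t : Fin (s + 1), t.val ≤ s - 1 → lam (w t) = 0)

/-! If no positive edge `c_{ks} > 0` leads into a chain `s = j_1 < ⋯ < j_r` with negative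
edges `c_{j_t j_{t+1}} < 0` and `ℓ_{j_r} > 0`, downward induction on `k` shows that every point
of `C(c,ℓ)` has `x_k ≥ 0` and `A_k(x) ≥ 0`: a positive summand of `Σ_s c_{ks} x_s` would be such a
forbidden edge, while `0 < x_k ≤ A_k(x)` forces `ℓ_k > 0` or a negative edge from `k` to a
positive coordinate, which extends the chain. So `C(c,ℓ)` is `{x | 0 ≤ x_k ≤ A_k(x) ∀ k}` and
`ρ ≡ 1` on it. Freeing the coordinates one at a time from the last, each stage of this set is
the region between the previous stage and the graph of the affine function `A_k ≥ 0` over it,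
so it is the convex hull of the previous vertices and their lifts to that graph. -/

theorem convexHull_union_image_add_smul {E : Type*} [AddCommGroup E] [Module ℝ E] (e : E)
    (f : E →ᵃ[ℝ] ℝ) {s : Set E} (hf : ∀ v ∈ s, 0 ≤ f v) :
    convexHull ℝ (s ∪ (fun v => v + f v • e) '' s) =
      {x | ∃ y ∈ convexHull ℝ s, ∃ t ∈ Set.Icc 0 (f y), y + t • e = x} := by
  apply Set.Subset.antisymm
  · refine convexHull_min ?_ ?_
    · rintro _ (hv | ⟨v, hv, rfl⟩)
      · exact ⟨_, subset_convexHull ℝ s hv, 0, ⟨le_rfl, hf _ hv⟩, by simp⟩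
      · exact ⟨v, subset_convexHull ℝ s hv, f v, ⟨hf v hv, le_rfl⟩, rfl⟩
    · rintro _ ⟨y₁, hy₁, t₁, ⟨ht₁, ht₁f⟩, rfl⟩ _ ⟨y₂, hy₂, t₂, ⟨ht₂, ht₂f⟩, rfl⟩ a b ha hb hab
      refine ⟨a • y₁ + b • y₂, convex_convexHull ℝ s hy₁ hy₂ ha hb hab, a * t₁ + b * t₂,
        ⟨by positivity, ?_⟩, by module⟩
      rw [Convex.combo_affine_apply hab, smul_eq_mul, smul_eq_mul]
      gcongr
  · rintro _ ⟨y, hy, t, ⟨ht, htf⟩, rfl⟩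
    have hsub : convexHull ℝ s ⊆ convexHull ℝ (s ∪ (fun v => v + f v • e) '' s) :=
      convexHull_mono Set.subset_union_left
    have hgy : y + f y • e ∈ convexHull ℝ (s ∪ (fun v => v + f v • e) '' s) := by
      let g : E →ᵃ[ℝ] E :=
        AffineMap.id ℝ E + (LinearMap.toSpanSingleton ℝ E e).toAffineMap.comp f
      exact convexHull_mono Set.subset_union_right (g.image_convexHull s ▸ ⟨y, hy, rfl⟩)
    rcases (ht.trans htf).eq_or_lt with hf0 | hfpos
    · obtain rfl : t = 0 := le_antisymm (hf0 ▸ htf) ht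
      simpa using hsub hy
    · have := (convex_convexHull ℝ _).add_smul_sub_mem (hsub hy) hgy
        (t := t / f y) ⟨by positivity, (div_le_one hfpos).2 htf⟩
      rwa [add_sub_cancel_left, smul_smul, div_mul_cancel₀ _ hfpos.ne'] at this

inductive NegChain {n : ℕ} (c : Fin n → Fin n → ℤ) (ℓ : Fin n → ℤ) : Fin n → Prop
  | of_pos {k : Fin n} : 0 < ℓ k → NegChain c ℓ k
  | cons {k s : Fin n} : k < s → c k s < 0 → NegChain c ℓ s → NegChain c ℓ k

theorem NegChain.exists_strictMono {n : ℕ} {c : Fin n → Fin n → ℤ} {ℓ : Fin n → ℤ}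
    {k : Fin n} (h : NegChain c ℓ k) :
    ∃ (s : ℕ) (j : Fin (s + 1) → Fin n), StrictMono j ∧ j 0 = k ∧
      0 < ℓ (j (Fin.last s)) ∧ ∀ t : Fin s, c (j t.castSucc) (j t.succ) < 0 := by
  induction h with
  | of_pos hk => exact ⟨0, fun _ => _, fun a b h => absurd h (by omega), rfl, hk, fun t => t.elim0⟩
  | @cons k _ hks hc _ ih =>
    obtain ⟨s, j, hj, rfl, hlast, hneg⟩ := ih
    refine ⟨s + 1, Matrix.vecCons k j, strictMono_vecCons.2 ⟨hks, hj⟩, rfl, by simpa, ?_⟩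
    intro t
    cases t using Fin.cases with
    | zero => simpa
    | succ t => simpa [← Fin.succ_castSucc] using hneg t

section Positivity

variable {n : ℕ} {c : Fin n → Fin n → ℤ} {ℓ : Fin n → ℤ}

theorem GKA_congr {j : Fin n} {x y : Fin n → ℝ} (h : ∀ s, j < s → x s = y s) :
    GKA c ℓ j x = GKA c ℓ j y := by
  unfold GKA
  congr 1
  exact sum_congr rfl fun s hs => by rw [h s (mem_filter.1 hs).2]

theorem GKA_nonneg {k : Fin n} {x : Fin n → ℝ} (hℓ : 0 ≤ ℓ k)
    (hno : ∀ s, k < s → 0 < c k s → ¬ NegChain c ℓ s)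
    (hx : ∀ s, k < s → 0 ≤ x s ∧ (0 < x s → NegChain c ℓ s)) :
    0 ≤ GKA c ℓ k x := by
  have hterm : ∀ s ∈ univ.filter (k < ·), (c k s : ℝ) * x s ≤ 0 := by
    intro s hs
    have hks := (mem_filter.1 hs).2
    obtain ⟨hxs, hchain⟩ := hx s hks
    rcases hxs.eq_or_lt with h0 | hpos
    · rw [← h0, mul_zero]
    · have hc : c k s ≤ 0 := not_lt.1 fun hc => hno s hks hc (hchain hpos)
      exact mul_nonpos_of_nonpos_of_nonneg (by exact_mod_cast hc) hpos.le
  have hℓ' : (0 : ℝ) ≤ ℓ k := by exact_mod_cast hℓ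
  unfold GKA
  linarith [sum_nonpos hterm]

theorem negChain_of_pos_of_le_GKA {k : Fin n} {x : Fin n → ℝ}
    (hx : ∀ s, k < s → 0 ≤ x s ∧ (0 < x s → NegChain c ℓ s))
    (hpos : 0 < x k) (hle : x k ≤ GKA c ℓ k x) : NegChain c ℓ k := by
  by_cases hℓ : 0 < ℓ k
  · exact .of_pos hℓ
  have hsum : ∑ s ∈ univ.filter (k < ·), (c k s : ℝ) * x s < ∑ s ∈ univ.filter (k < ·), 0 := by
    have hℓ' : (ℓ k : ℝ) ≤ 0 := by exact_mod_cast not_lt.1 hℓ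
    unfold GKA at hle
    rw [sum_const_zero]
    linarith
  obtain ⟨s, hs, hneg⟩ := exists_lt_of_sum_lt hsum
  have hks := (mem_filter.1 hs).2
  obtain ⟨hxs, hchain⟩ := hx s hks
  have hxs' : 0 < x s := hxs.lt_of_ne fun h => by simp [← h] at hneg
  exact .cons hks (by exact_mod_cast neg_of_mul_neg_left hneg hxs) (hchain hxs')

theorem nonneg_and_negChain (hℓ : ∀ i, 0 ≤ ℓ i)
    (hno : ∀ k s, k < s → 0 < c k s → ¬ NegChain c ℓ s) {x : Fin n → ℝ}
    (hx : ∀ j, x j ≠ 0 →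
      (GKA c ℓ j x < x j ∧ x j < 0) ∨ (0 ≤ x j ∧ x j ≤ GKA c ℓ j x))
    (k : Fin n) : 0 ≤ x k ∧ (0 < x k → NegChain c ℓ k) := by
  induction k using WellFoundedGT.induction with
  | _ k ih =>
    rcases eq_or_ne (x k) 0 with h0 | hne
    · simp [h0]
    rcases hx k hne with ⟨hlt, hneg⟩ | ⟨hnn, hle⟩
    · linarith [GKA_nonneg (hℓ k) (hno k) ih]
    · exact ⟨hnn, fun hpos => negChain_of_pos_of_le_GKA ih hpos hle⟩

end Positivity

section Polytope

variable {n : ℕ} {c : Fin n → Fin n → ℤ} {ℓ : Fin n → ℤ}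

noncomputable def GKA.toAffineMap (c : Fin n → Fin n → ℤ) (ℓ : Fin n → ℤ) (j : Fin n) :
    (Fin n → ℝ) →ᵃ[ℝ] ℝ :=
  AffineMap.const ℝ _ (ℓ j : ℝ) -
    (∑ k ∈ univ.filter (j < ·),
      (c j k : ℝ) • LinearMap.proj (R := ℝ) (φ := fun _ => ℝ) k).toAffineMap

theorem GKA.coe_toAffineMap (c : Fin n → Fin n → ℤ) (ℓ : Fin n → ℤ) (j : Fin n) :
    ⇑(GKA.toAffineMap c ℓ j) = GKA c ℓ j := by
  ext x
  simp [GKA.toAffineMap, GKA]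

theorem GKA_add_smul_single {j k : Fin n} (hkj : k ≤ j) (x : Fin n → ℝ) (t : ℝ) :
    GKA c ℓ j (x + t • Pi.single k 1) = GKA c ℓ j x :=
  GKA_congr fun s hs => by simp [(hkj.trans_lt hs).ne']

def GKpoly (c : Fin n → Fin n → ℤ) (ℓ : Fin n → ℤ) (m : ℕ) : Set (Fin n → ℝ) :=
  {x | ∀ j : Fin n, (j.val < m → x j = 0) ∧ (m ≤ j.val → 0 ≤ x j ∧ x j ≤ GKA c ℓ j x)}

theorem GKpoly_eq_zero (c : Fin n → Fin n → ℤ) (ℓ : Fin n → ℤ) : GKpoly c ℓ n = {0} := by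
  ext x
  refine ⟨fun hx => funext fun j => (hx j).1 j.isLt, ?_⟩
  rintro rfl j
  exact ⟨fun _ => rfl, fun h => absurd j.isLt h.not_gt⟩

theorem GKpoly_eq_prism (k : Fin n) :
    GKpoly c ℓ k = {x | ∃ y ∈ GKpoly c ℓ (k + 1),
      ∃ t ∈ Set.Icc 0 (GKA c ℓ k y), y + t • Pi.single k 1 = x} := by
  ext x
  constructor
  · intro hx
    have hA : ∀ j, k ≤ j → GKA c ℓ j (x - x k • Pi.single k 1) = GKA c ℓ j x := fun j hj => by
      rw [sub_eq_add_neg, ← neg_smul, GKA_add_smul_single hj]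
    refine ⟨x - x k • Pi.single k 1, fun j => ⟨fun hj => ?_, fun hj => ?_⟩,
      x k, ?_, sub_add_cancel _ _⟩
    · rcases (Nat.lt_succ_iff.1 hj).lt_or_eq with hj | hj
      · simp [Fin.ne_of_lt hj, (hx j).1 hj]
      · obtain rfl : j = k := Fin.ext hj
        simp
    · have hkj : k < j := Fin.lt_def.2 hj
      simpa [hkj.ne', hA j hkj.le] using (hx j).2 (by omega)
    · simpa [hA k le_rfl] using (hx k).2 le_rfl
  · rintro ⟨y, hy, t, ⟨ht, htA⟩, rfl⟩ j
    rcases lt_trichotomy j k with hjk | rfl | hkj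
    · have hj : j.val < k.val := hjk
      simp [hjk.ne, (hy j).1 (by omega), hj, hj.not_ge]
    · simp [GKA_add_smul_single le_rfl, (hy j).1 (by omega), ht, htA]
    · have hj : k.val < j.val := hkj
      simp [hkj.ne', GKA_add_smul_single hkj.le, (hy j).2 (by omega), hj.le, hj.not_gt]

theorem GKA_nonneg_of_mem_GKpoly (hℓ : ∀ i, 0 ≤ ℓ i)
    (hno : ∀ k s, k < s → 0 < c k s → ¬ NegChain c ℓ s) {m : ℕ} {x : Fin n → ℝ}
    (hx : x ∈ GKpoly c ℓ m) (j : Fin n) : 0 ≤ GKA c ℓ j x := by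
  refine GKA_nonneg (hℓ j) (hno j) fun s _ => nonneg_and_negChain hℓ hno (fun i hi => ?_) s
  refine .inr ((hx i).2 ?_)
  by_contra h
  exact hi ((hx i).1 (not_le.1 h))

theorem exists_finset_GKpoly_eq_convexHull (hℓ : ∀ i, 0 ≤ ℓ i)
    (hno : ∀ k s, k < s → 0 < c k s → ¬ NegChain c ℓ s) {m : ℕ} (hm : m ≤ n) :
    ∃ S : Finset (Fin n → ℝ), GKpoly c ℓ m = convexHull ℝ ↑S := by
  induction hm using Nat.decreasingInduction with
  | self => exact ⟨{0}, by rw [GKpoly_eq_zero, coe_singleton, convexHull_singleton]⟩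
  | of_succ m hm ih =>
    classical
    obtain ⟨S, hS⟩ := ih
    set f := GKA.toAffineMap c ℓ ⟨m, hm⟩
    refine ⟨S ∪ S.image fun v => v + f v • Pi.single ⟨m, hm⟩ 1, ?_⟩
    have hf : ∀ v ∈ (S : Set (Fin n → ℝ)), 0 ≤ f v := fun v hv => by
      rw [GKA.coe_toAffineMap]
      exact GKA_nonneg_of_mem_GKpoly hℓ hno (hS ▸ subset_convexHull ℝ _ hv) _
    rw [coe_union, coe_image, convexHull_union_image_add_smul _ f hf, ← hS,
      GKA.coe_toAffineMap]
    exact GKpoly_eq_prism ⟨m, hm⟩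

end Polytope

theorem GKcube_eq_GKpoly_zero {n : ℕ} {c : Fin n → Fin n → ℤ} {ℓ : Fin n → ℤ}
    (hℓ : ∀ i, 0 ≤ ℓ i) (hno : ∀ k s, k < s → 0 < c k s → ¬ NegChain c ℓ s) :
    GKcube c ℓ = GKpoly c ℓ 0 := by
  ext x
  refine ⟨fun hx j => ⟨fun h => absurd h j.val.not_lt_zero, fun _ => ?_⟩,
    fun hx j => .inr ((hx j).2 j.val.zero_le)⟩
  have hnn := (nonneg_and_negChain hℓ hno (fun i _ => hx i) j).1
  exact (hx j).resolve_left fun h => h.2.not_ge hnn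

theorem GKrho_eq_one_of_nonneg {n : ℕ} {c : Fin n → Fin n → ℤ} {ℓ : Fin n → ℤ}
    {x : Fin n → ℝ} (hx : x ∈ GKcube c ℓ) (hnn : ∀ k, 0 ≤ x k) : GKrho c ℓ x = 1 := by
  have hsgn : ∀ k, GKsgn (x k) = -1 := fun k => if_neg (hnn k).not_gt
  simp [GKrho, hx, hsgn, ← mul_pow]

/-- If `ℓ_i ≥ 0` for all `i` and `(C(c,ℓ), ρ)` is twisted,
then there is an increasing sequence of indices `j_0 < j_1 < ⋯ < j_s` with
`s ≥ 1` such that `ℓ_{j_s} > 0`, `c_{j_0 j_1} > 0`, and `c_{j_t j_{t+1}} < 0`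
for all `t = 1, …, s−1`. -/
theorem statement2 {n : ℕ} (c : Fin n → Fin n → ℤ) (ℓ : Fin n → ℤ)
    (hℓ : ∀ i, 0 ≤ ℓ i) (htw : ¬ GKUntwisted c ℓ) :
    ∃ (s : ℕ) (hs : 1 ≤ s) (j : Fin (s + 1) → Fin n), StrictMono j ∧
      0 < ℓ (j (Fin.last s)) ∧
      0 < c (j 0) (j ⟨1, by omega⟩) ∧
      ∀ t : Fin s, 1 ≤ t.val → c (j t.castSucc) (j t.succ) < 0 := by
  by_contra hwalk
  have hno : ∀ k s, k < s → 0 < c k s → ¬ NegChain c ℓ s := by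
    intro k s hks hc hs
    obtain ⟨m, j, hj, rfl, hlast, hneg⟩ := hs.exists_strictMono
    refine hwalk ⟨m + 1, by omega, Matrix.vecCons k j, strictMono_vecCons.2 ⟨hks, hj⟩,
      by simpa, by simpa, fun t ht => ?_⟩
    obtain ⟨t, rfl⟩ := Fin.exists_succ_eq.2 (Fin.pos_iff_ne_zero.1 ht)
    simpa [← Fin.succ_castSucc] using hneg t
  obtain ⟨S, hS⟩ := exists_finset_GKpoly_eq_convexHull hℓ hno n.zero_le
  have hcube : GKcube c ℓ = convexHull ℝ ↑S := (GKcube_eq_GKpoly_zero hℓ hno).trans hS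
  refine htw ⟨?_, ?_, ⟨S, hcube⟩, fun x hx => GKrho_eq_one_of_nonneg hx fun k => ?_⟩
  · exact hcube ▸ (S.finite_toSet.isCompact_convexHull ℝ).isClosed
  · exact hcube ▸ convex_convexHull ℝ _
  · exact (nonneg_and_negChain hℓ hno (fun i _ => hx i) k).1
end

section
/- Let A be the Cartan matrix of a complex semisimple Lie algebra of rank r, let I = (i_1,…,i_n) be a word with entries in {1,…,r}, and let λ = (λ_1,…,λ_r) be a dominant weight. Let (C(c,ℓ), ρ) be the associated Grossberg–Karshon twisted cube (c_{jk} = A_{i_j i_k}, ℓ_j = λ_{i_j}). If there exists a subword (i_{j_0}, i_{j_1}, …, i_{j_s}) of I which is a hesitant λ-walk, then (C(c,ℓ), ρ) is twisted. -/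
open Finset

/-!
Take a hesitant `λ`-walk at positions `P 0 < P 1 < ⋯ < P s` of the word which is as short as
possible and, among the shortest ones, has `P 0` as late as possible. Restarting the walk at an
earlier occurrence of one of its letters shows that no letter `i (P u)`, `u ≥ 2`, occurs before
`P u`, and that `i (P 1)` does not occur strictly between `P 0` and `P 1`.

Let `m` be the Cartier data `GKm` of the sign vector supported on `P 1, …, P s`. Off-diagonal
Cartan entries are nonpositive and consecutive walk letters are adjacent, so
`m (P t) ≥ λ + m (P (t + 1))` and `m` is positive along the walk. The point that agrees with `m`
except for the value `-m (P 1) / 2` at `P 0` lies in `C(c,ℓ)`: at `P 0` the upper bound is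
`A_{P 0} = -m (P 1)` because the hesitation letter meets itself with Cartan entry `2`, and every
other constraint is a sum of nonpositive Cartan entries against nonnegative values. That point
has exactly one negative coordinate, so `ρ = -1` there.
-/

section GKA

variable {n : ℕ} (c : Fin n → Fin n → ℤ) (ℓ : Fin n → ℤ)

lemma GKA_add_single (k p : Fin n) (x : Fin n → ℝ) (δ : ℝ) :
    GKA c ℓ k (x + Pi.single p δ) = GKA c ℓ k x - if k < p then (c k p : ℝ) * δ else 0 := by
  classical
  simp only [GKA, Pi.add_apply, mul_add, sum_add_distrib, Pi.single_apply, mul_ite, mul_zero,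
    sum_ite_eq', mem_filter, mem_univ, true_and]
  ring

variable {c ℓ}

lemma GKA_eq_sub_sum_of_support {k : Fin n} {x : Fin n → ℝ} (T : Finset (Fin n))
    (hT : ∀ k' ∈ T, k < k') (hx : ∀ k', k < k' → k' ∉ T → x k' = 0) :
    GKA c ℓ k x = ℓ k - ∑ k' ∈ T, (c k k' : ℝ) * x k' := by
  rw [GKA, sum_subset (s₁ := T)]
  · intro k' hk'
    simpa using hT k' hk'
  · intro k' hk' hk'T
    simp only [mem_filter, mem_univ, true_and] at hk'
    simp [hx k' hk' hk'T]

lemma le_GKA_of_terms_nonpos {k : Fin n} {x : Fin n → ℝ}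
    (hx : ∀ k', k < k' → (c k k' : ℝ) * x k' ≤ 0) : (ℓ k : ℝ) ≤ GKA c ℓ k x := by
  have := sum_nonpos fun k' (hk' : k' ∈ univ.filter (k < ·)) => hx k' (by simpa using hk')
  rw [GKA]
  linarith

lemma sub_le_GKA_of_terms_nonpos {k k'' : Fin n} {x : Fin n → ℝ}
    (hx : ∀ k', k < k' → (c k k' : ℝ) * x k' ≤ 0) (hk'' : k < k'') :
    (ℓ k : ℝ) - c k k'' * x k'' ≤ GKA c ℓ k x := by
  classical
  have hmem : k'' ∈ univ.filter (k < ·) := by simpa using hk''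
  have := sum_nonpos fun k' (hk' : k' ∈ (univ.filter (k < ·)).erase k'') =>
    hx k' (by simpa using (mem_erase.1 hk').2)
  rw [GKA, ← add_sum_erase _ _ hmem]
  linarith

lemma GKrho_eq_neg_one {x : Fin n → ℝ} (hx : x ∈ GKcube c ℓ) {p : Fin n} (hp : x p < 0)
    (hnonneg : ∀ k ≠ p, 0 ≤ x k) : GKrho c ℓ x = -1 := by
  classical
  have hsgn : ∀ k ∈ univ.erase p, GKsgn (x k) = -1 := fun k hk =>
    if_neg (not_lt.2 (hnonneg k (mem_erase.1 hk).1))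
  rw [GKrho, if_pos hx, ← mul_prod_erase _ _ (mem_univ p), prod_congr rfl hsgn, GKsgn,
    if_pos hp, prod_const, card_erase_of_mem (mem_univ p), card_univ, Fintype.card_fin,
    one_mul, ← pow_add]
  obtain ⟨m, rfl⟩ : ∃ m, n = m + 1 := Nat.exists_eq_succ_of_ne_zero p.pos.ne'
  rw [Nat.add_sub_cancel, show m + 1 + m = 2 * m + 1 by ring, pow_succ, pow_mul]
  norm_num

end GKA

section GKm

variable {n : ℕ} (c : Fin n → Fin n → ℤ) (ℓ : Fin n → ℤ) (σ : Fin n → Bool)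

lemma GKm_eq (k : Fin n) : GKm c ℓ σ k =
    if σ k then ℓ k - ∑ k' ∈ univ.filter (k < ·), c k k' * GKm c ℓ σ k' else 0 := by
  rw [GKm, sum_attach _ (fun k' => c k k' * GKm c ℓ σ k')]

variable {σ}

lemma GKm_of_false {k : Fin n} (hk : σ k = false) : GKm c ℓ σ k = 0 := by
  rw [GKm_eq, if_neg (by simp [hk])]

lemma GKA_GKm {k : Fin n} (hk : σ k = true) :
    GKA c ℓ k (fun k' => (GKm c ℓ σ k' : ℝ)) = GKm c ℓ σ k := by
  rw [GKm_eq, if_pos hk, GKA]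
  push_cast
  rfl

variable {c ℓ}

lemma GKm_nonneg (hℓ : ∀ k, 0 ≤ ℓ k)
    (hc : ∀ k k', σ k = true → σ k' = true → k < k' → c k k' ≤ 0) (k : Fin n) :
    0 ≤ GKm c ℓ σ k := by
  induction k using WellFoundedGT.induction with
  | _ k ih =>
    rw [GKm_eq]
    split_ifs with hk
    · have : ∑ k' ∈ univ.filter (k < ·), c k k' * GKm c ℓ σ k' ≤ 0 := by
        refine sum_nonpos fun k' hk' => ?_
        have hkk' : k < k' := by simpa using hk'
        cases hk' : σ k'
        · simp [GKm_of_false c ℓ hk']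
        · exact mul_nonpos_of_nonpos_of_nonneg (hc k k' hk hk' hkk') (ih k' hkk')
      linarith [hℓ k]
    · exact le_rfl

lemma mul_GKm_nonpos (hℓ : ∀ k, 0 ≤ ℓ k)
    (hc : ∀ k k', σ k = true → σ k' = true → k < k' → c k k' ≤ 0) {k : Fin n}
    (hk : ∀ k', σ k' = true → k < k' → c k k' ≤ 0) (k' : Fin n) (hkk' : k < k') :
    (c k k' : ℝ) * GKm c ℓ σ k' ≤ 0 := by
  cases hk' : σ k'
  · simp [GKm_of_false c ℓ hk']
  · exact_mod_cast mul_nonpos_of_nonpos_of_nonneg (hk k' hk' hkk') (GKm_nonneg hℓ hc k')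

end GKm

section HesitantWalk

variable {r n : ℕ} (A : Matrix (Fin r) (Fin r) ℤ) (lam : Fin r → ℤ) (i : Fin n → Fin r)

structure IsHesitantWalk (s : ℕ) (P : ℕ → Fin n) : Prop where
  one_le : 1 ≤ s
  strictMonoOn : StrictMonoOn P (Set.Iic s)
  hesitates : i (P 0) = i (P 1)
  adj : ∀ t, 1 ≤ t → t < s → A (i (P t)) (i (P (t + 1))) < 0
  lam_last_pos : 0 < lam (i (P s))

variable {A lam i}

lemma IsHesitantLambdaWalkSeq.isHesitantWalk {s : ℕ} {j : Fin (s + 1) → Fin n}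
    (hj : StrictMono j) (hw : IsHesitantLambdaWalkSeq A lam (i ∘ j)) :
    IsHesitantWalk A lam i s (fun t => j (Fin.clamp t s)) := by
  obtain ⟨hs, h01, hadj, hlast⟩ := hw
  have hclamp : ∀ t (ht : t ≤ s), Fin.clamp t s = ⟨t, Nat.lt_succ_of_le ht⟩ := fun t ht =>
    Fin.ext (by simp [Fin.clamp, ht])
  refine ⟨hs, fun t ht u hu htu => ?_, ?_, fun t ht1 hts => ?_, ?_⟩
  · rw [hclamp t ht, hclamp u hu]
    exact hj (Fin.mk_lt_mk.2 htu)
  · have h1 : (⟨1, Nat.lt_succ_of_le hs⟩ : Fin (s + 1)) = 1 :=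
      Fin.ext (Nat.mod_eq_of_lt (by omega)).symm
    rw [hclamp 0 s.zero_le, hclamp 1 hs, h1]
    exact h01
  · rw [hclamp t hts.le, hclamp (t + 1) hts]
    exact (hadj ⟨t, hts⟩ ht1).2
  · rw [hclamp s le_rfl]
    exact hlast

lemma IsHesitantWalk.restart {s : ℕ} {P : ℕ → Fin n} (hW : IsHesitantWalk A lam i s P)
    {u : ℕ} (hu : 1 ≤ u) (hus : u ≤ s) {k : Fin n} (hk : k < P u) (hik : i k = i (P u)) :
    IsHesitantWalk A lam i (s - u + 1) (fun t => if t = 0 then k else P (u + t - 1)) := by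
  refine ⟨by omega, fun t ht t' ht' htt' => ?_, ?_, fun t ht1 hts => ?_, ?_⟩
  · simp only [Set.mem_Iic] at ht ht'
    have hPt' : P u ≤ P (u + t' - 1) :=
      hW.strictMonoOn.monotoneOn (by simp [hus]) (by simp; omega) (by omega)
    rcases Nat.eq_zero_or_pos t with rfl | ht0
    · simpa [show t' ≠ 0 by omega] using hk.trans_le hPt'
    · simpa [show t ≠ 0 by omega, show t' ≠ 0 by omega] using
        hW.strictMonoOn (by simp; omega) (by simp; omega) (by omega)
  · simpa using hik
  · simpa [show t ≠ 0 by omega, show u + (t + 1) - 1 = u + t - 1 + 1 by omega] using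
      hW.adj (u + t - 1) (by omega) (by omega)
  · simpa [show u + (s - u + 1) - 1 = s by omega] using hW.lam_last_pos

structure IsMinimalHesitantWalk (A : Matrix (Fin r) (Fin r) ℤ) (lam : Fin r → ℤ)
    (i : Fin n → Fin r) (s : ℕ) (P : ℕ → Fin n) : Prop
    extends IsHesitantWalk A lam i s P where
  letter_ne_of_lt : ∀ u, 2 ≤ u → u ≤ s → ∀ k < P u, i k ≠ i (P u)
  letter_ne_of_mem_Ioo : ∀ k, P 0 < k → k < P 1 → i k ≠ i (P 1)

lemma exists_minimal_hesitantWalk {s₀ : ℕ} {P₀ : ℕ → Fin n}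
    (h : IsHesitantWalk A lam i s₀ P₀) :
    ∃ s P, IsMinimalHesitantWalk A lam i s P := by
  classical
  have hlen : ∃ s P, IsHesitantWalk A lam i s P := ⟨s₀, P₀, h⟩
  set s := Nat.find hlen
  -- among the shortest walks, take one whose hesitation starts as late as possible
  have hgap : ∃ m, ∃ P, IsHesitantWalk A lam i s P ∧ (P 0 : ℕ) + m = n := by
    obtain ⟨P, hP⟩ := Nat.find_spec hlen
    exact ⟨_, P, hP, Nat.add_sub_of_le (P 0).isLt.le⟩
  obtain ⟨P, hW, hm⟩ := Nat.find_spec hgap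
  refine ⟨s, P, hW, fun u hu hus k hk hik => ?_, fun k h0k hk1 hik => ?_⟩
  · exact Nat.find_min hlen (m := s - u + 1) (by have := hW.one_le; omega)
      ⟨_, hW.restart (by omega) hus hk hik⟩
  · have hW' := hW.restart le_rfl hW.one_le hk1 hik
    rw [Nat.sub_add_cancel hW.one_le] at hW'
    exact Nat.find_min hgap (m := n - k) (by have := Fin.lt_def.1 h0k; omega)
      ⟨_, hW', by simp⟩

end HesitantWalk

section WalkPoint

variable {r n : ℕ} {A : Matrix (Fin r) (Fin r) ℤ} {lam : Fin r → ℤ} {i : Fin n → Fin r}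
  {s : ℕ} {P : ℕ → Fin n}

def walkCartier (A : Matrix (Fin r) (Fin r) ℤ) (lam : Fin r → ℤ) (i : Fin n → Fin r)
    (s : ℕ) (P : ℕ → Fin n) : Fin n → ℤ :=
  GKm (fun a b => A (i a) (i b)) (fun a => lam (i a)) (fun k => decide (k ∈ (Icc 1 s).image P))

lemma IsHesitantWalk.lt_of_mem_image (hW : IsHesitantWalk A lam i s P) {k : Fin n}
    (hk : k ∈ (Icc 1 s).image P) : P 0 < k ∧ P 1 ≤ k := by
  obtain ⟨u, hu, rfl⟩ := mem_image.1 hk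
  rw [mem_Icc] at hu
  exact ⟨hW.strictMonoOn (by simp) (by simp [hu.2]) hu.1,
    hW.strictMonoOn.monotoneOn (by simp [hW.one_le]) (by simp [hu.2]) hu.1⟩

lemma IsMinimalHesitantWalk.letter_ne (hW : IsMinimalHesitantWalk A lam i s P) {k k' : Fin n}
    (hk : i k ≠ i (P 1) ∨ P 1 ≤ k) (hk' : k' ∈ (Icc 1 s).image P) (hkk' : k < k') :
    i k ≠ i k' := by
  obtain ⟨u, hu, rfl⟩ := mem_image.1 hk'
  rw [mem_Icc] at hu
  rcases (show u = 1 ∨ 2 ≤ u by omega) with rfl | hu2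
  · exact hk.resolve_right (not_le.2 hkk')
  · exact hW.letter_ne_of_lt u hu2 hu.2 k hkk'

lemma terms_walkCartier_nonpos (hoff : ∀ a b, a ≠ b → A a b ≤ 0) (hlam : ∀ a, 0 ≤ lam a)
    (hW : IsMinimalHesitantWalk A lam i s P) {k : Fin n} (hk : i k ≠ i (P 1) ∨ P 1 ≤ k)
    (k' : Fin n) (hkk' : k < k') : (A (i k) (i k') : ℝ) * walkCartier A lam i s P k' ≤ 0 := by
  unfold walkCartier
  refine mul_GKm_nonpos (fun a => hlam (i a))
    (fun k₁ k₂ hk₁ hk₂ hk₁₂ => hoff (i k₁) (i k₂) ?_)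
    (fun k₂ hk₂ hkk₂ => hoff (i k) (i k₂) ?_) k' hkk'
  · rw [decide_eq_true_iff] at hk₁ hk₂
    exact hW.letter_ne (Or.inr (hW.lt_of_mem_image hk₁).2) hk₂ hk₁₂
  · rw [decide_eq_true_iff] at hk₂
    exact hW.letter_ne hk hk₂ hkk₂

lemma walkCartier_eq_GKA {k : Fin n} (hk : k ∈ (Icc 1 s).image P) :
    (walkCartier A lam i s P k : ℝ) = GKA (fun a b => A (i a) (i b)) (fun a => lam (i a)) k
      (fun k' => (walkCartier A lam i s P k' : ℝ)) :=
  (GKA_GKm _ _ (decide_eq_true hk)).symm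

lemma walkCartier_of_not_mem {k : Fin n} (hk : k ∉ (Icc 1 s).image P) :
    walkCartier A lam i s P k = 0 :=
  GKm_of_false _ _ (decide_eq_false hk)

lemma walkCartier_pos (hoff : ∀ a b, a ≠ b → A a b ≤ 0) (hlam : ∀ a, 0 ≤ lam a)
    (hW : IsMinimalHesitantWalk A lam i s P) {t : ℕ} (ht : 1 ≤ t) (hts : t ≤ s) :
    0 < (walkCartier A lam i s P (P t) : ℝ) := by
  have hmem : ∀ t, 1 ≤ t → t ≤ s → P t ∈ (Icc 1 s).image P := fun t ht hts =>
    mem_image_of_mem P (mem_Icc.2 ⟨ht, hts⟩)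
  have hterms : ∀ t, 1 ≤ t → t ≤ s → ∀ k', P t < k' →
      (A (i (P t)) (i k') : ℝ) * walkCartier A lam i s P k' ≤ 0 := fun t ht hts =>
    terms_walkCartier_nonpos hoff hlam hW (Or.inr (hW.lt_of_mem_image (hmem t ht hts)).2)
  induction hts using Nat.decreasingInduction with
  | self =>
    rw [walkCartier_eq_GKA (hmem s ht le_rfl)]
    exact lt_of_lt_of_le (by exact_mod_cast hW.lam_last_pos)
      (le_GKA_of_terms_nonpos (hterms s ht le_rfl))
  | of_succ t hts ih =>
    have hnext := ih (by omega)
    have hadj : (A (i (P t)) (i (P (t + 1))) : ℝ) ≤ -1 := by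
      exact_mod_cast Int.le_sub_one_of_lt (hW.adj t ht hts)
    have hP : P t < P (t + 1) := hW.strictMonoOn (by simp; omega) (by simp; omega) (by omega)
    rw [walkCartier_eq_GKA (hmem t ht hts.le)]
    refine lt_of_lt_of_le ?_ (sub_le_GKA_of_terms_nonpos (hterms t ht hts.le) hP)
    have hlamt : (0 : ℝ) ≤ lam (i (P t)) := by exact_mod_cast hlam _
    nlinarith

lemma GKA_walkCartier_of_le (hdiag : ∀ a, A a a = 2) (hW : IsHesitantWalk A lam i s P)
    {k : Fin n} (hk : k ≤ P 0) (hik : i k = i (P 1)) :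
    GKA (fun a b => A (i a) (i b)) (fun a => lam (i a)) k
      (fun k' => (walkCartier A lam i s P k' : ℝ)) = -(walkCartier A lam i s P (P 1) : ℝ) := by
  set W := (Icc 1 s).image P
  have hP1 : P 1 ∈ W := mem_image_of_mem P (mem_Icc.2 ⟨le_rfl, hW.one_le⟩)
  have hzero : ∀ k', k' ∉ W → (walkCartier A lam i s P k' : ℝ) = 0 := fun k' hk' => by
    simp [walkCartier_of_not_mem hk']
  have hrow : GKA (fun a b => A (i a) (i b)) (fun a => lam (i a)) k
      (fun k' => (walkCartier A lam i s P k' : ℝ)) =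
      lam (i (P 1)) - ∑ k' ∈ W, (A (i (P 1)) (i k') : ℝ) * walkCartier A lam i s P k' := by
    rw [GKA_eq_sub_sum_of_support W (fun k' hk' => hk.trans_lt (hW.lt_of_mem_image hk').1)
      (fun k' _ hk' => hzero k' hk'), hik]
  have hP1eq : (walkCartier A lam i s P (P 1) : ℝ) =
      lam (i (P 1)) -
        ∑ k' ∈ W.erase (P 1), (A (i (P 1)) (i k') : ℝ) * walkCartier A lam i s P k' := by
    rw [walkCartier_eq_GKA hP1, GKA_eq_sub_sum_of_support (W.erase (P 1))]
    · intro k' hk'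
      obtain ⟨hne, hk'W⟩ := mem_erase.1 hk'
      exact lt_of_le_of_ne (hW.lt_of_mem_image hk'W).2 hne.symm
    · exact fun k' hk' hk'W => hzero k' fun h => hk'W (mem_erase.2 ⟨hk'.ne', h⟩)
  rw [hrow, ← add_sum_erase _ _ hP1, hdiag]
  push_cast
  linarith

noncomputable def walkPoint (A : Matrix (Fin r) (Fin r) ℤ) (lam : Fin r → ℤ)
    (i : Fin n → Fin r) (s : ℕ) (P : ℕ → Fin n) : Fin n → ℝ :=
  (fun k => (walkCartier A lam i s P k : ℝ)) +
    Pi.single (P 0) (-(walkCartier A lam i s P (P 1) : ℝ) / 2)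

lemma GKA_walkPoint (k : Fin n) :
    GKA (fun a b => A (i a) (i b)) (fun a => lam (i a)) k (walkPoint A lam i s P) =
      GKA (fun a b => A (i a) (i b)) (fun a => lam (i a)) k
        (fun k' => (walkCartier A lam i s P k' : ℝ)) -
      if k < P 0 then (A (i k) (i (P 0)) : ℝ) * (-(walkCartier A lam i s P (P 1) : ℝ) / 2)
      else 0 :=
  GKA_add_single _ _ _ _ _ _

lemma GKA_walkPoint_nonneg (hdiag : ∀ a, A a a = 2) (hoff : ∀ a b, a ≠ b → A a b ≤ 0)
    (hlam : ∀ a, 0 ≤ lam a) (hW : IsMinimalHesitantWalk A lam i s P) {k : Fin n}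
    (hk0 : k ≠ P 0) :
    0 ≤ GKA (fun a b => A (i a) (i b)) (fun a => lam (i a)) k (walkPoint A lam i s P) := by
  have hm1 := walkCartier_pos hoff hlam hW le_rfl hW.one_le
  have hlamk : (0 : ℝ) ≤ lam (i k) := by exact_mod_cast hlam _
  rw [GKA_walkPoint]
  by_cases hhes : i k = i (P 1) ∧ k < P 0
  · rw [GKA_walkCartier_of_le hdiag hW.toIsHesitantWalk hhes.2.le hhes.1, if_pos hhes.2,
      hhes.1, ← hW.hesitates, hdiag]
    push_cast
    linarith
  have hrow : i k ≠ i (P 1) ∨ P 1 ≤ k := by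
    by_contra! h
    exact hW.letter_ne_of_mem_Ioo k (lt_of_le_of_ne (not_lt.1 (hhes ∘ And.intro h.1)) hk0.symm)
      h.2 h.1
  have hterms := terms_walkCartier_nonpos hoff hlam hW hrow
  split_ifs with hlt
  · have hik : i k ≠ i (P 1) := fun h => hhes ⟨h, hlt⟩
    have hP01 : P 0 < P 1 := hW.strictMonoOn (by simp) (by simp [hW.one_le]) one_pos
    have hle := sub_le_GKA_of_terms_nonpos (c := fun a b => A (i a) (i b))
      (ℓ := fun a => lam (i a)) hterms (hlt.trans hP01)
    have hA : (A (i k) (i (P 1)) : ℝ) ≤ 0 := by exact_mod_cast hoff _ _ hik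
    rw [hW.hesitates]
    nlinarith
  · rw [sub_zero]
    exact hlamk.trans (le_GKA_of_terms_nonpos (ℓ := fun a => lam (i a)) hterms)

lemma walkCartier_nonneg (hoff : ∀ a b, a ≠ b → A a b ≤ 0) (hlam : ∀ a, 0 ≤ lam a)
    (hW : IsMinimalHesitantWalk A lam i s P) (k : Fin n) :
    (0 : ℝ) ≤ walkCartier A lam i s P k := by
  by_cases hk : k ∈ (Icc 1 s).image P
  · obtain ⟨t, ht, rfl⟩ := mem_image.1 hk
    exact (walkCartier_pos hoff hlam hW (mem_Icc.1 ht).1 (mem_Icc.1 ht).2).le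
  · simp [walkCartier_of_not_mem hk]

lemma walkPoint_of_ne {k : Fin n} (hk : k ≠ P 0) :
    walkPoint A lam i s P k = walkCartier A lam i s P k := by
  simp [walkPoint, hk]

lemma walkPoint_zero (hW : IsHesitantWalk A lam i s P) :
    walkPoint A lam i s P (P 0) = -(walkCartier A lam i s P (P 1) : ℝ) / 2 := by
  have : P 0 ∉ (Icc 1 s).image P := fun h => (hW.lt_of_mem_image h).1.false
  simp [walkPoint, walkCartier_of_not_mem this]

lemma walkPoint_mem_GKcube (hdiag : ∀ a, A a a = 2) (hoff : ∀ a b, a ≠ b → A a b ≤ 0)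
    (hlam : ∀ a, 0 ≤ lam a) (hW : IsMinimalHesitantWalk A lam i s P) :
    walkPoint A lam i s P ∈ GKcube (fun a b => A (i a) (i b)) (fun a => lam (i a)) := by
  intro k
  by_cases hk0 : k = P 0
  · subst hk0
    left
    have hm1 := walkCartier_pos hoff hlam hW le_rfl hW.one_le
    rw [GKA_walkPoint, if_neg (lt_irrefl _), sub_zero,
      GKA_walkCartier_of_le hdiag hW.toIsHesitantWalk le_rfl hW.hesitates,
      walkPoint_zero hW.toIsHesitantWalk]
    constructor <;> linarith
  · right
    rw [walkPoint_of_ne hk0]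
    refine ⟨walkCartier_nonneg hoff hlam hW k, ?_⟩
    by_cases hkW : k ∈ (Icc 1 s).image P
    · rw [GKA_walkPoint, if_neg (not_lt.2 (hW.lt_of_mem_image hkW).1.le), sub_zero,
        ← walkCartier_eq_GKA hkW]
    · rw [walkCartier_of_not_mem hkW, Int.cast_zero]
      exact GKA_walkPoint_nonneg hdiag hoff hlam hW hk0

end WalkPoint

/-- "if" direction.  With `A` a Cartan matrix, `i` a word,
`λ` dominant, `c_{jk} = A_{i_j i_k}`, `ℓ_j = λ_{i_j}`: if some subword of `i`
is a hesitant `λ`-walk, then the Grossberg–Karshon twisted cube is twisted. -/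
theorem statement7 {r n : ℕ} (A : Matrix (Fin r) (Fin r) ℤ)
    (hA : IsCartanMatrix A) (lam : Fin r → ℤ) (hlam : ∀ a, 0 ≤ lam a)
    (i : Fin n → Fin r) (s : ℕ) (j : Fin (s + 1) → Fin n) (hj : StrictMono j)
    (hw : IsHesitantLambdaWalkSeq A lam (i ∘ j)) :
    ¬ GKUntwisted (fun j k => A (i j) (i k)) (fun j => lam (i j)) := by
  obtain ⟨s', P, hW⟩ := exists_minimal_hesitantWalk (hw.isHesitantWalk hj)
  have hmem := walkPoint_mem_GKcube hA.1 hA.2.1 hlam hW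
  have hneg : walkPoint A lam i s' P (P 0) < 0 := by
    rw [walkPoint_zero hW.toIsHesitantWalk]
    linarith [walkCartier_pos hA.2.1 hlam hW le_rfl hW.one_le]
  have hrho := GKrho_eq_neg_one hmem hneg fun k hk => by
    rw [walkPoint_of_ne hk]
    exact walkCartier_nonneg hA.2.1 hlam hW k
  intro hU
  linarith [hU.2.2.2 _ hmem]
end
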